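/- arXiv:1904.03890 — 4 statements merged into one kernel-verified Lean document; each statement's English description precedes it below -/
import Mathlib

section
/- A woman who has distinct partners in two stable matchings has at least one other man besides her μ_M-partner that she ranks above her μ_M-partner; more precisely, since μ_M is woman-pessimal, every woman weakly prefers her partner in any stable matching μ to her partner in μ_M, i.e. μ(w) ⪰_w μ_M(w) for every stable matching μ and every woman w. -/
/-- A matching between men `M` and women `W`: a partial bijection given by
`toM` (partner of each man) and `toW` (partner of each woman). -/
structure Matching (M W : Type*) where
  toM : M → Option W
  toW : W → Option M
  inv : ∀ m w, toM m = some w ↔ toW w = some m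

/-- A stable matching instance: acceptability predicates and strict
preference relations (`prefM m w w'` means man `m` strictly prefers `w` to `w'`). -/
structure Inst (M W : Type*) where
  accM : M → W → Prop
  accW : W → M → Prop
  prefM : M → W → W → Prop
  prefW : W → M → M → Prop

/-- `(m, w)` blocks `μ`: they are mutually acceptable and each strictly prefers
the other to their current partner (being single is worse than any acceptable partner). -/
def Blocks {M W : Type*} (I : Inst M W) (μ : Matching M W) (m : M) (w : W) : Prop :=
  I.accM m w ∧ I.accW w m ∧
  (∀ w', μ.toM m = some w' → I.prefM m w w') ∧
  (∀ m', μ.toW w = some m' → I.prefW w m m')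

/-- A matching is stable: everyone matched to an acceptable partner, and no blocking pair. -/
def IsStable {M W : Type*} (I : Inst M W) (μ : Matching M W) : Prop :=
  (∀ m w, μ.toM m = some w → I.accM m w ∧ I.accW w m) ∧
  (∀ m w, ¬ Blocks I μ m w)

/-- Since the man-optimal stable matching `μM` is
woman-pessimal, every woman weakly prefers her partner in any stable matching
`μ` to her partner in `μM`: `μ(w) ⪰_w μM(w)`. -/
theorem man_optimal_is_woman_pessimal {M W : Type*} [Fintype M] [Fintype W]
    (I : Inst M W)
    (hasymM : ∀ m w w', I.prefM m w w' → ¬ I.prefM m w' w)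
    (hasymW : ∀ w m m', I.prefW w m m' → ¬ I.prefW w m' m)
    -- preferences are total (strict orders) on acceptable partners:
    (htotM : ∀ m w w', I.accM m w → I.accM m w' → w ≠ w' →
        I.prefM m w w' ∨ I.prefM m w' w)
    (htotW : ∀ w m m', I.accW w m → I.accW w m' → m ≠ m' →
        I.prefW w m m' ∨ I.prefW w m' m)
    (μM : Matching M W) (hμM : IsStable I μM)
    -- `μM` is man-optimal: every man weakly prefers his `μM`-partner to his
    -- partner in any stable matching.
    (hopt : ∀ μ : Matching M W, IsStable I μ → ∀ m w,
        μ.toM m = some w → ∃ w', μM.toM m = some w' ∧ (w' = w ∨ I.prefM m w' w)) :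
    ∀ μ : Matching M W, IsStable I μ → ∀ w m m',
      μ.toW w = some m → μM.toW w = some m' → m = m' ∨ I.prefW w m m' := by
  intro μ hμ w m m' hm hm'
  by_cases hne : m = m'
  · exact Or.inl hne
  right
  have hMm' : μM.toM m' = some w := (μM.inv m' w).mpr hm'
  have hμm : μ.toM m = some w := (μ.inv m w).mpr hm
  have haccμ := hμ.1 m w hμm
  have haccM := hμM.1 m' w hMm'
  by_contra hnp
  have hpref : I.prefW w m' m := by
    rcases htotW w m m' haccμ.2 haccM.2 hne with h | h
    · exact absurd h hnp
    · exact h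
  -- show (m', w) blocks μ
  refine hμ.2 m' w ⟨haccM.1, haccM.2, ?_, ?_⟩
  · intro w' hw'
    obtain ⟨w'', hw'', hor⟩ := hopt μ hμ m' w' hw'
    rw [hMm'] at hw''
    have hww : w = w'' := Option.some.inj hw''
    rcases hor with heq | h
    · exfalso
      have h1 : μ.toW w' = some m' := (μ.inv m' w').mp hw'
      rw [← heq, ← hww, hm] at h1
      exact hne (Option.some.inj h1)
    · rw [hww]; exact h
  · intro m'' hm''
    rw [hm] at hm''
    injection hm'' with h; subst h
    exact hpref
end

section
/- Suppose all women rank their acceptable men according to a single common master list m₁ ≻ m₂ ≻ ⋯ ≻ m_M (restricted to their acceptable sets). Then the stable matching is unique: every person has at most one stable partner. -/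
lemma key_step {Mn : ℕ} {W : Type*}
    (I : Inst (Fin Mn) W)
    (hasymM : ∀ m w w', I.prefM m w w' → ¬ I.prefM m w' w)
    (htotM : ∀ m w w', I.accM m w → I.accM m w' → w ≠ w' →
        I.prefM m w w' ∨ I.prefM m w' w)
    (hmaster : ∀ w (i j : Fin Mn), I.accW w i → I.accW w j →
        (I.prefW w i j ↔ i < j))
    (μ μ' : Matching (Fin Mn) W) (hs : IsStable I μ) (hs' : IsStable I μ')
    (m : Fin Mn) (ih : ∀ i, i < m → μ.toM i = μ'.toM i)
    (w : W) (hw : μ.toM m = some w) : μ'.toM m = some w := by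
  by_contra h
  obtain ⟨haccM, haccW⟩ := hs.1 m w hw
  -- (m, w) does not block μ', and the woman-side condition holds, so
  -- the man-side condition must fail.
  have hWside : ∀ m', μ'.toW w = some m' → I.prefW w m m' := by
    intro m' hm'
    have hm'M : μ'.toM m' = some w := (μ'.inv m' w).2 hm'
    have hne : m' ≠ m := fun e => h (e ▸ hm'M)
    have hlt : m < m' := by
      rcases lt_or_gt_of_ne (Ne.symm hne) with hlt | hgt
      · exact hlt
      · exfalso
        have := ih m' hgt
        have : μ.toM m' = some w := this ▸ hm'M
        have : μ.toW w = some m' := (μ.inv m' w).1 this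
        have hm : μ.toW w = some m := (μ.inv m w).1 hw
        rw [this] at hm
        exact hne (Option.some_injective _ hm)
    exact (hmaster w m m' haccW (hs'.1 m' w hm'M).2).2 hlt
  have hnotblock := hs'.2 m w
  have hMside : ¬ (∀ w', μ'.toM m = some w' → I.prefM m w w') := by
    intro hM
    exact hnotblock ⟨haccM, haccW, hM, hWside⟩
  push_neg at hMside
  obtain ⟨w'', hw'', hnp⟩ := hMside
  have hne : w ≠ w'' := fun e => h (e ▸ hw'')
  obtain ⟨haccM'', haccW''⟩ := hs'.1 m w'' hw''
  have hpref : I.prefM m w'' w := (htotM m w w'' haccM haccM'' hne).resolve_left hnp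
  -- now (m, w'') blocks μ
  apply hs.2 m w''
  refine ⟨haccM'', haccW'', ?_, ?_⟩
  · intro w₁ hw₁
    have : w₁ = w := Option.some_injective _ (hw₁ ▸ hw)
    exact this ▸ hpref
  · intro m₁ hm₁
    have hm₁M : μ.toM m₁ = some w'' := (μ.inv m₁ w'').2 hm₁
    have hne₁ : m₁ ≠ m := by
      intro e
      exact hne (Option.some_injective _ ((e ▸ hm₁M) ▸ hw)).symm
    have hlt : m < m₁ := by
      rcases lt_or_gt_of_ne (Ne.symm hne₁) with hlt | hgt
      · exact hlt
      · exfalso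
        have := ih m₁ hgt
        have h1 : μ'.toM m₁ = some w'' := this ▸ hm₁M
        have h2 : μ'.toW w'' = some m₁ := (μ'.inv m₁ w'').1 h1
        have h3 : μ'.toW w'' = some m := (μ'.inv m w'').1 hw''
        rw [h2] at h3
        exact hne₁ (Option.some_injective _ h3)
    exact (hmaster w'' m m₁ haccW'' (hs.1 m₁ w'' hm₁M).2).2 hlt

lemma toM_eq {Mn : ℕ} {W : Type*}
    (I : Inst (Fin Mn) W)
    (hasymM : ∀ m w w', I.prefM m w w' → ¬ I.prefM m w' w)
    (htotM : ∀ m w w', I.accM m w → I.accM m w' → w ≠ w' →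
        I.prefM m w w' ∨ I.prefM m w' w)
    (hmaster : ∀ w (i j : Fin Mn), I.accW w i → I.accW w j →
        (I.prefW w i j ↔ i < j))
    (μ μ' : Matching (Fin Mn) W) (hs : IsStable I μ) (hs' : IsStable I μ') :
    ∀ m, μ.toM m = μ'.toM m := by
  intro m
  induction m using WellFoundedLT.induction with
  | ind m ih =>
    cases hμ : μ.toM m with
    | some w =>
      exact (key_step I hasymM htotM hmaster μ μ' hs hs' m ih w hμ).symm
    | none =>
      cases hμ' : μ'.toM m with
      | some w =>
        have := key_step I hasymM htotM hmaster μ' μ hs' hs m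
          (fun i hi => (ih i hi).symm) w hμ'
        rw [hμ] at this; exact this
      | none => rfl

/-- If all women rank their acceptable men according to a
single common master list `m₀ ≻ m₁ ≻ ⋯` (here men are `Fin Mn`, ranked by
index), then the stable matching is unique: every person has at most one
stable partner. -/
theorem master_list_unique_stable {Mn : ℕ} {W : Type*} [Fintype W]
    (I : Inst (Fin Mn) W)
    (hasymM : ∀ m w w', I.prefM m w w' → ¬ I.prefM m w' w)
    (htotM : ∀ m w w', I.accM m w → I.accM m w' → w ≠ w' →
        I.prefM m w w' ∨ I.prefM m w' w)
    -- women's preferences follow the master list (restricted to their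
    -- acceptable sets):
    (hmaster : ∀ w (i j : Fin Mn), I.accW w i → I.accW w j →
        (I.prefW w i j ↔ i < j)) :
    ∀ μ μ' : Matching (Fin Mn) W, IsStable I μ → IsStable I μ' →
      (∀ (m : Fin Mn) (w w' : W), μ.toM m = some w → μ'.toM m = some w' → w = w') ∧
      (∀ (w : W) (m m' : Fin Mn), μ.toW w = some m → μ'.toW w = some m' → m = m') := by
  intro μ μ' hs hs'
  have heq := toM_eq I hasymM htotM hmaster μ μ' hs hs'
  constructor
  · intro m w w' h1 h2
    rw [heq m, h2] at h1
    exact (Option.some_injective _ h1).symm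
  · intro w m m' h1 h2
    have h1' : μ.toM m = some w := (μ.inv m w).2 h1
    have h3 : μ'.toM m = some w := (heq m) ▸ h1'
    have h4 : μ'.toW w = some m := (μ'.inv m w).1 h3
    rw [h4] at h2
    exact Option.some_injective _ h2
end

section
/- Let a woman w have popularity preferences given by positive weights D_w on her acceptable men: she builds her preference list by sampling acceptable men without replacement with probability proportional to the remaining weights. For any acceptable men m, a₁,…,a_p with m ∉ {a₁,…,a_p}, the conditional probability that w ranks m above a₁, given that she ranks a₁ ≻ a₂ ≻ ⋯ ≻ a_p (in that relative order among {a₁,…,a_p}), equals D_w(m) / (D_w(m) + Σ_{i=1}^p D_w(a_i)). -/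
open Finset

/-- Plackett–Luce probability of the full ranking `σ` (position `i` ↦ element
`σ i`, position `0` being the most preferred). -/
noncomputable def plProb {A : Type*} [Fintype A] (D : A → ℝ)
    (σ : Fin (Fintype.card A) ≃ A) : ℝ :=
  ∏ i : Fin (Fintype.card A),
    D (σ i) / ∑ j ∈ univ.filter (fun j => i ≤ j), D (σ j)

/-- Probability of an event (a set of rankings) under the Plackett–Luce model. -/
noncomputable def plEvent {A : Type*} [Fintype A] [DecidableEq A] (D : A → ℝ)
    (E : (Fin (Fintype.card A) ≃ A) → Prop) [DecidablePred E] : ℝ :=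
  ∑ σ ∈ univ.filter E, plProb D σ

section Aux

universe u

lemma sum_filter_succ {M : Type*} [AddCommMonoid M] {k : ℕ} (f : Fin (k + 1) → M) (i : Fin k) :
    ∑ j ∈ univ.filter (fun j => i.succ ≤ j), f j
      = ∑ j ∈ univ.filter (fun j => i ≤ j), f j.succ := by
  refine Finset.sum_nbij'
    (fun j => (⟨j.val - 1, by have := i.isLt; have := j.isLt; omega⟩ : Fin k))
    (fun j => j.succ) ?_ ?_ ?_ ?_ ?_
  · intro j hj
    simp only [mem_filter, mem_univ, true_and, Fin.le_def, Fin.val_succ] at hj ⊢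
    omega
  · intro j hj
    simp only [mem_filter, mem_univ, true_and, Fin.le_def, Fin.val_succ] at hj ⊢
    omega
  · intro j hj
    simp only [mem_filter, mem_univ, true_and, Fin.le_def, Fin.val_succ] at hj
    ext
    simp only [Fin.val_succ]
    omega
  · intro j hj
    ext
    simp only [Fin.val_succ]
    omega
  · intro j hj
    simp only [mem_filter, mem_univ, true_and, Fin.le_def, Fin.val_succ] at hj
    congr 1
    ext
    simp only [Fin.val_succ]
    omega

variable {A : Type u} [Fintype A] [DecidableEq A]

/-- Glue a top element `x` onto a ranking of the remaining elements. -/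
def glueE (x : A) (h : Fintype.card A = Fintype.card {y : A // y ≠ x} + 1)
    (τ : Fin (Fintype.card {y : A // y ≠ x}) ≃ {y : A // y ≠ x}) :
    Fin (Fintype.card A) ≃ A :=
  (finCongr h).trans ((finSuccEquiv _).trans ((Equiv.optionSubtype x).symm τ).val)

variable {x : A} {h : Fintype.card A = Fintype.card {y : A // y ≠ x} + 1}
  {τ : Fin (Fintype.card {y : A // y ≠ x}) ≃ {y : A // y ≠ x}}

lemma optionSubtype_val_symm_self :
    (((Equiv.optionSubtype x).symm τ).val).symm x = none := by
  rw [Equiv.symm_apply_eq]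
  simp

lemma optionSubtype_val_symm_ne (y : A) (hy : y ≠ x) :
    (((Equiv.optionSubtype x).symm τ).val).symm y = some (τ.symm ⟨y, hy⟩) := by
  rw [Equiv.symm_apply_eq]
  simp

lemma glueE_symm_self : (glueE x h τ).symm x = (finCongr h).symm 0 := by
  simp only [glueE, Equiv.symm_trans_apply, optionSubtype_val_symm_self,
    finSuccEquiv_symm_none]

lemma glueE_symm_ne (y : A) (hy : y ≠ x) :
    (glueE x h τ).symm y = (finCongr h).symm (τ.symm ⟨y, hy⟩).succ := by
  simp only [glueE, Equiv.symm_trans_apply, optionSubtype_val_symm_ne y hy,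
    finSuccEquiv_symm_some]

lemma glueE_symm_lt_iff (y1 y2 : A) (h1 : y1 ≠ x) (h2 : y2 ≠ x) :
    (glueE x h τ).symm y1 < (glueE x h τ).symm y2 ↔ τ.symm ⟨y1, h1⟩ < τ.symm ⟨y2, h2⟩ := by
  rw [glueE_symm_ne y1 h1, glueE_symm_ne y2 h2]
  simp only [Fin.lt_def, finCongr_symm, finCongr_apply_coe, Fin.val_succ]
  omega

lemma glueE_symm_self_lt (y : A) (hy : y ≠ x) :
    (glueE x h τ).symm x < (glueE x h τ).symm y := by
  rw [glueE_symm_self, glueE_symm_ne y hy]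
  simp only [Fin.lt_def, finCongr_symm, finCongr_apply_coe, Fin.val_succ, Fin.val_zero]
  omega

lemma glueE_apply_zero (i : Fin (Fintype.card A)) (hi : i.val = 0) : glueE x h τ i = x := by
  have hz : finCongr h i = 0 := by ext; simpa using hi
  show (((Equiv.optionSubtype x).symm τ).val) (finSuccEquiv _ (finCongr h i)) = x
  rw [hz, finSuccEquiv_zero]
  simp

lemma plProb_glueE (D : A → ℝ) :
    plProb D (glueE x h τ) = D x / (∑ y : A, D y) * plProb (fun y => D y.val) τ := by
  classical
  have hgl : ∀ i, glueE x h τ i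
      = ((Equiv.optionSubtype x).symm τ).val (finSuccEquiv _ (finCongr h i)) := fun _ => rfl
  set g : Fin (Fintype.card {y : A // y ≠ x} + 1) → A :=
    fun i => ((Equiv.optionSubtype x).symm τ).val (finSuccEquiv _ i) with hg
  have step1 : plProb D (glueE x h τ)
      = ∏ i : Fin (Fintype.card {y : A // y ≠ x} + 1),
          D (g i) / ∑ j ∈ univ.filter (fun j => i ≤ j), D (g j) := by
    unfold plProb
    refine Fintype.prod_equiv (finCongr h) _ _ (fun i => ?_)
    rw [hgl]
    congr 1
    refine Finset.sum_equiv (finCongr h) (fun j => ?_) (fun j _ => ?_)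
    · simp only [mem_filter, mem_univ, true_and, Fin.le_def, finCongr_apply_coe]
    · rw [hgl]
  have hsum0 : ∑ j : Fin (Fintype.card {y : A // y ≠ x} + 1), D (g j) = ∑ y : A, D y :=
    Fintype.sum_equiv ((finSuccEquiv _).trans ((Equiv.optionSubtype x).symm τ).val)
      _ _ (fun j => rfl)
  have hzero : g 0 = x := by
    show ((Equiv.optionSubtype x).symm τ).val ((finSuccEquiv _) 0) = x
    rw [finSuccEquiv_zero]
    exact Equiv.optionSubtype_symm_apply_apply_none x τ
  have hsucc : ∀ i, g i.succ = (τ i).val := by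
    intro i
    show ((Equiv.optionSubtype x).symm τ).val ((finSuccEquiv _) i.succ) = _
    rw [finSuccEquiv_succ]
    exact Equiv.optionSubtype_symm_apply_apply_some x τ i
  rw [step1, Fin.prod_univ_succ]
  congr 1
  · have h2 : ∑ j ∈ univ.filter (fun j => (0 : Fin (Fintype.card {y : A // y ≠ x} + 1)) ≤ j),
        D (g j) = ∑ y : A, D y := by
      rw [Finset.filter_true_of_mem (fun j _ => Fin.zero_le j)]
      exact hsum0
    rw [hzero, h2]
  · unfold plProb
    refine Finset.prod_congr rfl (fun i _ => ?_)
    rw [hsucc i, sum_filter_succ (fun j => D (g j)) i]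
    simp only [hsucc]

/-- The inner sum over rankings of the complement of `x`. -/
noncomputable def Tsum (D : A → ℝ) {p : ℕ} (a : Fin p → A) (x : A)
    (h : Fintype.card A = Fintype.card {y : A // y ≠ x} + 1) : ℝ :=
  ∑ τ ∈ univ.filter
      (fun τ => ∀ i j : Fin p, i < j →
        (glueE x h τ).symm (a i) < (glueE x h τ).symm (a j)),
    plProb (fun y : {y : A // y ≠ x} => D y.val) τ

lemma sum_glueE (x : A) (h : Fintype.card A = Fintype.card {y : A // y ≠ x} + 1)
    (z : Fin (Fintype.card A)) (hzv : z.val = 0)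
    (f : (Fin (Fintype.card A) ≃ A) → ℝ)
    (E : (Fin (Fintype.card A) ≃ A) → Prop) [DecidablePred E] :
    ∑ σ ∈ univ.filter (fun σ => E σ ∧ σ z = x), f σ
      = ∑ τ ∈ univ.filter (fun τ => E (glueE x h τ)), f (glueE x h τ) := by
  classical
  have hnone : ((finCongr h).trans (finSuccEquiv _)).symm none = z := by
    show (finCongr h).symm ((finSuccEquiv _).symm none) = z
    rw [finSuccEquiv_symm_none]
    ext
    simp [hzv]
  have hun : ∀ (σ : Fin (Fintype.card A) ≃ A), σ z = x →
      (((finCongr h).trans (finSuccEquiv _)).symm.trans σ) none = x := by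
    intro σ hσ
    show σ (((finCongr h).trans (finSuccEquiv _)).symm none) = x
    rw [hnone]
    exact hσ
  have hgu : ∀ (σ : Fin (Fintype.card A) ≃ A)
      (pf : (((finCongr h).trans (finSuccEquiv _)).symm.trans σ) none = x),
      glueE x h ((Equiv.optionSubtype x)
        ⟨((finCongr h).trans (finSuccEquiv _)).symm.trans σ, pf⟩) = σ := by
    intro σ pf
    apply Equiv.ext
    intro i
    show (((Equiv.optionSubtype x).symm ((Equiv.optionSubtype x)
        ⟨((finCongr h).trans (finSuccEquiv _)).symm.trans σ, pf⟩)).val)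
        (finSuccEquiv _ (finCongr h i)) = σ i
    rw [Equiv.symm_apply_apply]
    show σ (((finCongr h).trans (finSuccEquiv _)).symm
        ((finSuccEquiv _) (finCongr h i))) = σ i
    congr 1
    show (finCongr h).symm ((finSuccEquiv _).symm ((finSuccEquiv _) (finCongr h i))) = i
    rw [Equiv.symm_apply_apply, Equiv.symm_apply_apply]
  have hug : ∀ (τ : Fin (Fintype.card {y : A // y ≠ x}) ≃ {y : A // y ≠ x})
      (pf : (((finCongr h).trans (finSuccEquiv _)).symm.trans (glueE x h τ)) none = x),
      (Equiv.optionSubtype x)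
        ⟨((finCongr h).trans (finSuccEquiv _)).symm.trans (glueE x h τ), pf⟩ = τ := by
    intro τ pf
    have hO : ((finCongr h).trans (finSuccEquiv _)).symm.trans (glueE x h τ)
        = ((Equiv.optionSubtype x).symm τ).val := by
      apply Equiv.ext
      intro o
      show ((Equiv.optionSubtype x).symm τ).val
          (finSuccEquiv _ (finCongr h (((finCongr h).trans (finSuccEquiv _)).symm o)))
          = ((Equiv.optionSubtype x).symm τ).val o
      congr 1
      show (finSuccEquiv _) (finCongr h ((finCongr h).symm ((finSuccEquiv _).symm o))) = o
      rw [Equiv.apply_symm_apply, Equiv.apply_symm_apply]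
    have hsub : (⟨((finCongr h).trans (finSuccEquiv _)).symm.trans (glueE x h τ), pf⟩ :
        {e : Option (Fin (Fintype.card {y : A // y ≠ x})) ≃ A // e none = x})
        = (Equiv.optionSubtype x).symm τ := Subtype.ext hO
    rw [hsub, Equiv.apply_symm_apply]
  refine Finset.sum_bij'
    (fun σ hσ => (Equiv.optionSubtype x)
      ⟨((finCongr h).trans (finSuccEquiv _)).symm.trans σ,
        hun σ (Finset.mem_filter.mp hσ).2.2⟩)
    (fun τ _ => glueE x h τ) ?_ ?_ ?_ ?_ ?_
  · intro σ hσ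
    simp only [Finset.mem_filter, Finset.mem_univ, true_and] at hσ ⊢
    rw [hgu]
    exact hσ.1
  · intro τ hτ
    simp only [Finset.mem_filter, Finset.mem_univ, true_and] at hτ ⊢
    exact ⟨hτ, glueE_apply_zero z hzv⟩
  · intro σ hσ
    exact hgu σ _
  · intro τ hτ
    exact hug τ _
  · intro σ hσ
    rw [hgu]

theorem key (n : ℕ) :
    ∀ {A : Type u} [Fintype A] [DecidableEq A] (_ : Fintype.card A = n) (D : A → ℝ)
      (_ : ∀ x, 0 < D x) {p : ℕ} (a : Fin p → A) (_ : Function.Injective a),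
      plEvent D (fun σ => ∀ i j : Fin p, i < j → σ.symm (a i) < σ.symm (a j))
        = ∏ i : Fin p, D (a i) / ∑ j ∈ univ.filter (fun j => i ≤ j), D (a j) := by
  induction n with
  | zero =>
    intro A _ _ hA D hD p a ha
    have hempty : IsEmpty A := Fintype.card_eq_zero_iff.mp hA
    have hp : p = 0 := by
      rcases Nat.eq_zero_or_pos p with h0 | h0
      · exact h0
      · exact (hempty.false (a ⟨0, h0⟩)).elim
    subst hp
    have htrue : univ.filter
        (fun σ : Fin (Fintype.card A) ≃ A =>
          ∀ i j : Fin 0, i < j → σ.symm (a i) < σ.symm (a j)) = univ := by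
      refine Finset.filter_true_of_mem (fun σ _ => ?_)
      intro i
      exact i.elim0
    have h1 : ∀ σ : Fin (Fintype.card A) ≃ A, plProb D σ = 1 := by
      intro σ
      unfold plProb
      apply Finset.prod_eq_one
      intro i _
      exact absurd i.isLt (by omega)
    have huniq : ∀ σ σ' : Fin (Fintype.card A) ≃ A, σ = σ' := by
      intro σ σ'
      apply Equiv.ext
      intro i
      exact absurd i.isLt (by omega)
    have hcard1 : Fintype.card (Fin (Fintype.card A) ≃ A) = 1 := by
      haveI : Unique (Fin (Fintype.card A) ≃ A) :=
        ⟨⟨(Fintype.equivFin A).symm⟩, fun σ => huniq σ _⟩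
      exact Fintype.card_unique
    have hcard0 : Fintype.card (Fin 0 ≃ A) = 1 := by
      haveI : Unique (Fin 0 ≃ A) :=
        ⟨⟨Equiv.equivOfIsEmpty _ _⟩, fun σ => by ext i; exact i.elim0⟩
      exact Fintype.card_unique
    unfold plEvent
    rw [htrue]
    rw [Finset.sum_congr rfl (fun σ _ => h1 σ), Finset.sum_const]
    simp [hcard1, hcard0]
  | succ n ih =>
    intro A _ _ hA D hD p a ha
    classical
    have hApos : 0 < Fintype.card A := by omega
    haveI hAne : Nonempty A := Fintype.card_pos_iff.mp hApos
    have hSall : 0 < ∑ y : A, D y :=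
      Finset.sum_pos (fun y _ => hD y) Finset.univ_nonempty
    set z : Fin (Fintype.card A) := ⟨0, hApos⟩ with hzdef
    have hcard : ∀ x : A, Fintype.card A = Fintype.card {y : A // y ≠ x} + 1 := by
      intro x
      rw [← Fintype.card_option]
      exact Fintype.card_congr (Equiv.optionSubtypeNe x).symm
    have hcard' : ∀ x : A, Fintype.card {y : A // y ≠ x} = n := by
      intro x
      have := hcard x
      omega
    have expand : plEvent D
        (fun σ : Fin (Fintype.card A) ≃ A =>
          ∀ i j : Fin p, i < j → σ.symm (a i) < σ.symm (a j))
        = ∑ x : A, ∑ σ ∈ univ.filter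
            (fun σ : Fin (Fintype.card A) ≃ A =>
              (∀ i j : Fin p, i < j → σ.symm (a i) < σ.symm (a j)) ∧ σ z = x),
            plProb D σ := by
      unfold plEvent
      rw [← Finset.sum_fiberwise (univ.filter _) (fun σ => σ z) (plProb D)]
      refine Finset.sum_congr rfl (fun x _ => ?_)
      rw [Finset.filter_filter]
    have inner : ∀ x : A,
        (∑ σ ∈ univ.filter
            (fun σ : Fin (Fintype.card A) ≃ A =>
              (∀ i j : Fin p, i < j → σ.symm (a i) < σ.symm (a j)) ∧ σ z = x),
          plProb D σ)
        = D x / (∑ y : A, D y) * Tsum D a x (hcard x) := by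
      intro x
      unfold Tsum
      rw [sum_glueE x (hcard x) z rfl (plProb D)]
      rw [Finset.mul_sum]
      exact Finset.sum_congr rfl (fun τ _ => plProb_glueE D)
    rw [expand, Finset.sum_congr rfl (fun x _ => inner x)]
    -- Evaluate the inner τ-sums
    have hTnot : ∀ x : A, (∀ k : Fin p, a k ≠ x) →
        Tsum D a x (hcard x)
        = ∏ i : Fin p, D (a i) / ∑ j ∈ univ.filter (fun j => i ≤ j), D (a j) := by
      intro x hx
      unfold Tsum
      have hfil : univ.filter
          (fun τ => ∀ i j : Fin p, i < j →
            (glueE x (hcard x) τ).symm (a i) < (glueE x (hcard x) τ).symm (a j))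
          = univ.filter (fun τ => ∀ i j : Fin p, i < j →
              τ.symm ⟨a i, hx i⟩ < τ.symm ⟨a j, hx j⟩) := by
        apply Finset.filter_congr
        intro τ _
        constructor <;> intro hE i j hij
        · exact (glueE_symm_lt_iff _ _ (hx i) (hx j)).mp (hE i j hij)
        · exact (glueE_symm_lt_iff _ _ (hx i) (hx j)).mpr (hE i j hij)
      have hstep := ih (hcard' x) (fun y => D y.val) (fun y => hD y.val)
        (fun k => (⟨a k, hx k⟩ : {y : A // y ≠ x}))
        (fun k1 k2 hEq => ha (congrArg Subtype.val hEq))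
      unfold plEvent at hstep
      rw [hfil]
      exact hstep
    rcases p with _ | q
    · -- p = 0 : normalization
      have hT : ∀ x : A, Tsum D a x (hcard x) = 1 := by
        intro x
        have := hTnot x (fun k => k.elim0)
        simpa using this
      rw [Finset.sum_congr rfl (fun x _ => by rw [hT x])]
      simp only [mul_one]
      rw [← Finset.sum_div]
      rw [div_self (ne_of_gt hSall)]
      simp
    · -- p = q + 1
      -- notation
      have hSpos : 0 < ∑ k : Fin (q + 1), D (a k) :=
        Finset.sum_pos (fun k _ => hD (a k)) Finset.univ_nonempty
      -- the case x = a k with k ≠ 0 : empty event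
      have hTk : ∀ k : Fin (q + 1), k ≠ 0 →
          Tsum D a (a k) (hcard (a k)) = 0 := by
        intro k hk
        unfold Tsum
        have hfil : univ.filter
            (fun τ => ∀ i j : Fin (q + 1), i < j →
              (glueE (a k) (hcard (a k)) τ).symm (a i)
                < (glueE (a k) (hcard (a k)) τ).symm (a j)) = ∅ := by
          rw [Finset.filter_eq_empty_iff]
          intro τ _
          intro hE
          have h0k : (0 : Fin (q + 1)) < k := Fin.pos_of_ne_zero hk
          have hlt := hE 0 k h0k
          have ha0 : a 0 ≠ a k := fun hEq => hk (ha hEq).symm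
          rw [glueE_symm_ne (a 0) ha0, glueE_symm_self] at hlt
          simp only [Fin.lt_def, finCongr_symm, finCongr_apply_coe, Fin.val_succ,
            Fin.val_zero] at hlt
          omega
        rw [hfil, Finset.sum_empty]
      -- the case x = a 0
      have hT0 : Tsum D a (a 0) (hcard (a 0))
          = ∏ i : Fin q, D (a i.succ)
              / ∑ j ∈ univ.filter (fun j => i ≤ j), D (a j.succ) := by
        unfold Tsum
        have hne : ∀ i : Fin q, a i.succ ≠ a 0 :=
          fun i hEq => (Fin.succ_ne_zero i) (ha hEq)
        have hfil : univ.filter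
            (fun τ => ∀ i j : Fin (q + 1), i < j →
              (glueE (a 0) (hcard (a 0)) τ).symm (a i)
                < (glueE (a 0) (hcard (a 0)) τ).symm (a j))
            = univ.filter (fun τ => ∀ i j : Fin q, i < j →
                τ.symm ⟨a i.succ, hne i⟩ < τ.symm ⟨a j.succ, hne j⟩) := by
          apply Finset.filter_congr
          intro τ _
          constructor
          · intro hE i j hij
            exact (glueE_symm_lt_iff _ _ (hne i) (hne j)).mp
              (hE i.succ j.succ (Fin.succ_lt_succ_iff.mpr hij))
          · intro hE i j hij
            rcases Fin.eq_zero_or_eq_succ j with rfl | ⟨j', rfl⟩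
            · exact absurd hij (by simp [Fin.lt_def])
            · rcases Fin.eq_zero_or_eq_succ i with rfl | ⟨i', rfl⟩
              · exact glueE_symm_self_lt (a j'.succ) (hne j')
              · exact (glueE_symm_lt_iff _ _ (hne i') (hne j')).mpr
                  (hE i' j' (Fin.succ_lt_succ_iff.mp hij))
        have hstep := ih (hcard' (a 0)) (fun y : {y : A // y ≠ a 0} => D y.val)
          (fun y => hD y.val)
          (fun k : Fin q => (⟨a k.succ, hne k⟩ : {y : A // y ≠ a 0}))
          (fun k1 k2 hEq => by
            have := ha (congrArg Subtype.val hEq)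
            exact Fin.succ_injective q this)
        unfold plEvent at hstep
        rw [hfil]
        exact hstep
      have hSne : (∑ y : A, D y) ≠ 0 := ne_of_gt hSall
      have hQP : D (a 0) * (∏ i : Fin q, D (a i.succ)
            / ∑ j ∈ univ.filter (fun j => i ≤ j), D (a j.succ))
          = (∑ k : Fin (q + 1), D (a k)) *
            ∏ i : Fin (q + 1), D (a i) / ∑ j ∈ univ.filter (fun j => i ≤ j), D (a j) := by
        have hP : (∏ i : Fin (q + 1), D (a i) / ∑ j ∈ univ.filter (fun j => i ≤ j), D (a j))
            = (D (a 0) / ∑ k : Fin (q + 1), D (a k)) *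
              ∏ i : Fin q, D (a i.succ)
                / ∑ j ∈ univ.filter (fun j => i ≤ j), D (a j.succ) := by
          rw [Fin.prod_univ_succ]
          congr 1
          · congr 1
            rw [Finset.filter_true_of_mem (fun j _ => Fin.zero_le j)]
          · refine Finset.prod_congr rfl (fun i _ => ?_)
            rw [sum_filter_succ (fun j => D (a j)) i]
        have hc : (∑ k : Fin (q + 1), D (a k)) *
            (D (a 0) / ∑ k : Fin (q + 1), D (a k)) = D (a 0) := by
          field_simp
        rw [hP, ← mul_assoc, hc]
      have himg : ∑ x ∈ Finset.image a univ,
          (D x / (∑ y : A, D y) * Tsum D a x (hcard x))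
          = D (a 0) / (∑ y : A, D y) *
            ∏ i : Fin q, D (a i.succ)
              / ∑ j ∈ univ.filter (fun j => i ≤ j), D (a j.succ) := by
        rw [Finset.sum_image (fun k1 _ k2 _ hEq => ha hEq)]
        rw [Fin.sum_univ_succ, hT0]
        have hzero : ∀ k : Fin q,
            D (a k.succ) / (∑ y : A, D y) * Tsum D a (a k.succ) (hcard (a k.succ)) = 0 := by
          intro k
          rw [hTk k.succ (Fin.succ_ne_zero k), mul_zero]
        rw [Finset.sum_congr rfl (fun k _ => hzero k), Finset.sum_const_zero, add_zero]
      have hSimg : ∑ x ∈ Finset.image a univ, D x = ∑ k : Fin (q + 1), D (a k) :=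
        Finset.sum_image (fun k1 _ k2 _ hEq => ha hEq)
      have hcomplD : ∑ x ∈ (Finset.image a univ)ᶜ, D x
          = (∑ y : A, D y) - ∑ k : Fin (q + 1), D (a k) := by
        have h2 := Finset.sum_add_sum_compl (Finset.image a univ) D
        linarith
      have hcompl : ∑ x ∈ (Finset.image a univ)ᶜ,
          (D x / (∑ y : A, D y) * Tsum D a x (hcard x))
          = ((∑ y : A, D y) - ∑ k : Fin (q + 1), D (a k)) *
            ((∏ i : Fin (q + 1), D (a i) / ∑ j ∈ univ.filter (fun j => i ≤ j), D (a j))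
              / (∑ y : A, D y)) := by
        have hstep : ∀ x ∈ (Finset.image a univ)ᶜ,
            D x / (∑ y : A, D y) * Tsum D a x (hcard x)
            = D x * ((∏ i : Fin (q + 1), D (a i)
                / ∑ j ∈ univ.filter (fun j => i ≤ j), D (a j)) / (∑ y : A, D y)) := by
          intro x hx
          have hxr : ∀ k : Fin (q + 1), a k ≠ x := by
            intro k hEq
            exact (Finset.mem_compl.mp hx)
              (Finset.mem_image.mpr ⟨k, Finset.mem_univ k, hEq⟩)
          rw [hTnot x hxr]
          ring
        rw [Finset.sum_congr rfl hstep, ← Finset.sum_mul, hcomplD]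
      rw [← Finset.sum_add_sum_compl (Finset.image a univ), himg, hcompl]
      rw [div_mul_eq_mul_div, hQP, mul_div_assoc, ← add_mul]
      have hsum : (∑ k : Fin (q + 1), D (a k))
          + ((∑ y : A, D y) - ∑ k : Fin (q + 1), D (a k)) = ∑ y : A, D y := by
        ring
      rw [hsum, mul_comm, div_mul_cancel₀ _ hSne]

end Aux

/-- For a woman with popularity preferences given by positive
weights `D` on her acceptable men: for acceptable men `m, a 0, …, a (p-1)` with
`m ∉ {a 0, …, a (p-1)}`, the conditional probability that she ranks `m` above
`a 0`, given that she ranks `a 0 ≻ a 1 ≻ ⋯ ≻ a (p-1)` (relative order), equals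
`D m / (D m + ∑ i, D (a i))`. -/
theorem plackett_luce_conditional {A : Type*} [Fintype A] [DecidableEq A]
    (D : A → ℝ) (hD : ∀ x, 0 < D x)
    {p : ℕ} (hp : 0 < p) (a : Fin p → A) (ha : Function.Injective a)
    (m : A) (hm : ∀ i, m ≠ a i) :
    plEvent D (fun σ => (σ.symm m < σ.symm (a ⟨0, hp⟩)) ∧
        ∀ i j : Fin p, i < j → σ.symm (a i) < σ.symm (a j))
      / plEvent D (fun σ => ∀ i j : Fin p, i < j → σ.symm (a i) < σ.symm (a j))
      = D m / (D m + ∑ i : Fin p, D (a i)) := by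
  classical
  obtain ⟨q, rfl⟩ : ∃ q, p = q + 1 := ⟨p - 1, (Nat.succ_pred_eq_of_pos hp).symm⟩
  set b : Fin (q + 2) → A := Fin.cons m a with hb
  have hbinj : Function.Injective b := by
    intro i j hij
    rcases Fin.eq_zero_or_eq_succ i with rfl | ⟨i', rfl⟩ <;>
      rcases Fin.eq_zero_or_eq_succ j with rfl | ⟨j', rfl⟩
    · rfl
    · rw [hb] at hij
      simp only [Fin.cons_zero, Fin.cons_succ] at hij
      exact absurd hij (hm j')
    · rw [hb] at hij
      simp only [Fin.cons_zero, Fin.cons_succ] at hij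
      exact absurd hij.symm (hm i')
    · rw [hb] at hij
      simp only [Fin.cons_succ] at hij
      exact congrArg Fin.succ (ha hij)
  have hnum := key (Fintype.card A) rfl D hD b hbinj
  have hden := key (Fintype.card A) rfl D hD a ha
  have hevent : ∀ σ : Fin (Fintype.card A) ≃ A,
      ((σ.symm m < σ.symm (a ⟨0, hp⟩)) ∧
        ∀ i j : Fin (q + 1), i < j → σ.symm (a i) < σ.symm (a j))
      ↔ (∀ i j : Fin (q + 2), i < j → σ.symm (b i) < σ.symm (b j)) := by
    intro σ
    have hb0 : b 0 = m := by rw [hb]; exact Fin.cons_zero _ _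
    have hbs : ∀ i : Fin (q + 1), b i.succ = a i := by
      intro i; rw [hb]; exact Fin.cons_succ _ _ _
    have h00 : a ⟨0, hp⟩ = a 0 := rfl
    constructor
    · rintro ⟨h1, h2⟩ i j hij
      rcases Fin.eq_zero_or_eq_succ j with rfl | ⟨j', rfl⟩
      · exact absurd hij (by simp [Fin.lt_def])
      · rcases Fin.eq_zero_or_eq_succ i with rfl | ⟨i', rfl⟩
        · rw [hb0, hbs j']
          rcases Fin.eq_zero_or_eq_succ j' with rfl | ⟨j'', rfl⟩
          · rw [← h00]; exact h1
          · exact lt_trans (h00 ▸ h1) (h2 0 j''.succ (Fin.succ_pos j''))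
        · rw [hbs i', hbs j']
          exact h2 i' j' (Fin.succ_lt_succ_iff.mp hij)
    · intro hO
      constructor
      · have := hO 0 ((0 : Fin (q + 1)).succ) (Fin.succ_pos 0)
        rw [hb0, hbs 0] at this
        rw [h00]
        exact this
      · intro i j hij
        have := hO i.succ j.succ (Fin.succ_lt_succ_iff.mpr hij)
        rw [hbs i, hbs j] at this
        exact this
  have hnum' : plEvent D (fun σ : Fin (Fintype.card A) ≃ A =>
        (σ.symm m < σ.symm (a ⟨0, hp⟩)) ∧
        ∀ i j : Fin (q + 1), i < j → σ.symm (a i) < σ.symm (a j))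
      = plEvent D (fun σ : Fin (Fintype.card A) ≃ A =>
        ∀ i j : Fin (q + 2), i < j → σ.symm (b i) < σ.symm (b j)) := by
    unfold plEvent
    refine Finset.sum_congr ?_ (fun _ _ => rfl)
    apply Finset.filter_congr
    intro σ _
    exact hevent σ
  have hsplit : (∏ i : Fin (q + 2), D (b i) / ∑ j ∈ univ.filter (fun j => i ≤ j), D (b j))
      = (D m / (D m + ∑ i : Fin (q + 1), D (a i))) *
        ∏ i : Fin (q + 1), D (a i) / ∑ j ∈ univ.filter (fun j => i ≤ j), D (a j) := by
    have hb0 : b 0 = m := by rw [hb]; exact Fin.cons_zero _ _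
    have hbs : ∀ i : Fin (q + 1), b i.succ = a i := by
      intro i; rw [hb]; exact Fin.cons_succ _ _ _
    rw [Fin.prod_univ_succ]
    congr 1
    · rw [hb0]
      congr 1
      rw [Finset.filter_true_of_mem (fun j _ => Fin.zero_le j), Fin.sum_univ_succ, hb0]
      simp only [hbs]
    · refine Finset.prod_congr rfl (fun i _ => ?_)
      rw [hbs i, sum_filter_succ (fun j => D (b j)) i]
      simp only [hbs]
  have hprodpos : 0 < ∏ i : Fin (q + 1),
      D (a i) / ∑ j ∈ univ.filter (fun j => i ≤ j), D (a j) := by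
    apply Finset.prod_pos
    intro i _
    apply div_pos (hD _)
    exact Finset.sum_pos (fun j _ => hD _)
      ⟨i, Finset.mem_filter.mpr ⟨Finset.mem_univ i, le_refl i⟩⟩
  rw [hnum', hnum, hden, hsplit, mul_div_assoc, div_self (ne_of_gt hprodpos), mul_one]
end

section
/- Under the Plackett–Luce (popularity) random ranking model with weights D on a finite set, the probability that a given tuple a₁,…,a_p appears in the relative order a₁ ≻ a₂ ≻ ⋯ ≻ a_p equals ∏_{i=1}^p D(a_i) / (Σ_{j=i}^p D(a_j)). -/
open Finset

namespace PLAux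

noncomputable def plw {A : Type*} [Fintype A] (n : ℕ) (D : A → ℝ) (σ : Fin n ≃ A) : ℝ :=
  ∏ i : Fin n, D (σ i) / ∑ j ∈ univ.filter (fun j => i ≤ j), D (σ j)

variable {A : Type*} [DecidableEq A]

def glue {n : ℕ} (x : A) (τ : Fin n ≃ {y : A // y ≠ x}) : Fin (n+1) ≃ A where
  toFun i := Fin.cases x (fun k => (τ k : A)) i
  invFun y := if h : y = x then 0 else (τ.symm ⟨y, h⟩).succ
  left_inv i := by
    induction i using Fin.cases with
    | zero => simp
    | succ k => simp [(τ k).2]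
  right_inv y := by
    by_cases h : y = x
    · simp [h]
    · simp [h]

@[simp] lemma glue_zero {n : ℕ} (x : A) (τ : Fin n ≃ {y : A // y ≠ x}) : glue x τ 0 = x := rfl

@[simp] lemma glue_succ {n : ℕ} (x : A) (τ : Fin n ≃ {y : A // y ≠ x}) (k : Fin n) :
    glue x τ k.succ = τ k := rfl

lemma glue_symm {n : ℕ} (x : A) (τ : Fin n ≃ {y : A // y ≠ x}) (y : A) :
    (glue x τ).symm y = if h : y = x then 0 else (τ.symm ⟨y, h⟩).succ := rfl

lemma glue_bijective {n : ℕ} [Fintype A] :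
    Function.Bijective (fun q : Σ x : A, (Fin n ≃ {y : A // y ≠ x}) => glue q.1 q.2) := by
  constructor
  · rintro ⟨x, τ⟩ ⟨x', τ'⟩ h
    have hx : x = x' := by
      have := congrArg (fun e : Fin (n+1) ≃ A => e 0) h
      simpa using this
    subst hx
    have hτ : τ = τ' := by
      ext k
      have := congrArg (fun e : Fin (n+1) ≃ A => e k.succ) h
      simpa using this
    simp [hτ]
  · intro σ
    refine ⟨⟨σ 0, ⟨fun k => ⟨σ k.succ, σ.injective.ne (Fin.succ_ne_zero k)⟩,
      fun y => (σ.symm y.1).pred (fun h => y.2 (by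
        have := σ.apply_symm_apply y.1
        rw [h] at this
        exact this.symm)), ?_, ?_⟩⟩, ?_⟩
    · intro k; simp
    · intro y; simp [Fin.succ_pred]
    · ext i
      induction i using Fin.cases with
      | zero => simp
      | succ k => simp

lemma sum_filter_succ {n : ℕ} (f : Fin (n+1) → ℝ) (i : Fin n) :
    ∑ j ∈ univ.filter (fun j => i.succ ≤ j), f j
      = ∑ j ∈ univ.filter (fun j => i ≤ j), f j.succ := by
  rw [Finset.sum_filter, Finset.sum_filter, Fin.sum_univ_succ]
  simp [Fin.succ_le_succ_iff, Fin.succ_ne_zero]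

lemma plw_glue {n : ℕ} [Fintype A] (D : A → ℝ) (x : A) (τ : Fin n ≃ {y : A // y ≠ x}) :
    plw (n+1) D (glue x τ) = D x / (∑ y, D y) * plw n (fun y => D y.1) τ := by
  unfold plw
  rw [Fin.prod_univ_succ]
  congr 1
  · rw [glue_zero]
    congr 1
    rw [Finset.filter_true_of_mem (fun j _ => Fin.zero_le j)]
    exact Equiv.sum_comp (glue x τ) D
  · refine Finset.prod_congr rfl fun i _ => ?_
    rw [glue_succ, sum_filter_succ]
    simp

lemma cond_glue_notmem {n p : ℕ} (x : A) (τ : Fin n ≃ {y : A // y ≠ x})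
    (a : Fin p → A) (hx : ∀ k, a k ≠ x) :
    (∀ i j : Fin p, i < j → (glue x τ).symm (a i) < (glue x τ).symm (a j)) ↔
    (∀ i j : Fin p, i < j → τ.symm ⟨a i, hx i⟩ < τ.symm ⟨a j, hx j⟩) := by
  refine forall_congr' fun i => forall_congr' fun j => imp_congr_right fun hij => ?_
  rw [glue_symm, glue_symm, dif_neg (hx i), dif_neg (hx j), Fin.succ_lt_succ_iff]

lemma cond_glue_head {n p' : ℕ} (a : Fin (p' + 1) → A) (ha : Function.Injective a)
    (τ : Fin n ≃ {y : A // y ≠ a 0}) :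
    (∀ i j : Fin (p' + 1), i < j →
        (glue (a 0) τ).symm (a i) < (glue (a 0) τ).symm (a j)) ↔
    (∀ i j : Fin p', i < j →
        τ.symm ⟨a i.succ, fun h => Fin.succ_ne_zero i (ha h)⟩
          < τ.symm ⟨a j.succ, fun h => Fin.succ_ne_zero j (ha h)⟩) := by
  constructor
  · intro h i j hij
    have := h i.succ j.succ (Fin.succ_lt_succ_iff.mpr hij)
    rwa [glue_symm, glue_symm, dif_neg, dif_neg, Fin.succ_lt_succ_iff] at this
  · intro h i j hij
    induction j using Fin.cases with
    | zero => exact absurd hij (Fin.not_lt_zero i)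
    | succ m =>
      induction i using Fin.cases with
      | zero =>
        rw [glue_symm, glue_symm, dif_pos rfl,
          dif_neg (fun hh => Fin.succ_ne_zero m (ha hh))]
        exact Fin.succ_pos _
      | succ k =>
        have hkm : k < m := by
          rwa [Fin.succ_lt_succ_iff] at hij
        have := h k m hkm
        rw [glue_symm, glue_symm, dif_neg, dif_neg, Fin.succ_lt_succ_iff]
        exact this

lemma cond_glue_mid {n p' : ℕ} (a : Fin (p' + 1) → A) (ha : Function.Injective a)
    (k : Fin p') (τ : Fin n ≃ {y : A // y ≠ a k.succ}) :
    ¬ (∀ i j : Fin (p' + 1), i < j →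
        (glue (a k.succ) τ).symm (a i) < (glue (a k.succ) τ).symm (a j)) := by
  intro h
  have := h 0 k.succ (Fin.succ_pos k)
  rw [glue_symm, glue_symm, dif_pos rfl] at this
  exact absurd this (Fin.not_lt_zero _)


lemma decomp {B : Type u} [Fintype B] [DecidableEq B] {n : ℕ} (D : B → ℝ)
    (P : (Fin (n+1) ≃ B) → Prop) [DecidablePred P] :
    ∑ σ ∈ univ.filter P, plw (n+1) D σ
      = ∑ x : B, (D x / ∑ y, D y) *
          ∑ τ : Fin n ≃ {y : B // y ≠ x},
            if P (glue x τ) then plw n (fun y => D y.1) τ else 0 := by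
  rw [Finset.sum_filter]
  rw [← Fintype.sum_bijective _ (glue_bijective (A := B) (n := n))
    (fun q => if P (glue q.1 q.2) then plw (n+1) D (glue q.1 q.2) else 0) _
    (fun q => rfl)]
  rw [← Finset.univ_sigma_univ, Finset.sum_sigma]
  refine Finset.sum_congr rfl fun x _ => ?_
  rw [Finset.mul_sum]
  refine Finset.sum_congr rfl fun τ _ => ?_
  rw [plw_glue]
  split <;> ring

lemma card_sub {B : Type u} [Fintype B] [DecidableEq B] {n : ℕ}
    (hc : Fintype.card B = n + 1) (x : B) : Fintype.card {y : B // y ≠ x} = n := by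
  have := Fintype.card_subtype_compl (fun y : B => y = x)
  simp only [Fintype.card_subtype_eq] at this
  rw [this, hc]
  omega

theorem key : ∀ (n : ℕ) (B : Type u) [Fintype B] [DecidableEq B],
    Fintype.card B = n → ∀ (D : B → ℝ), (∀ x, 0 < D x) →
    ∀ (p : ℕ) (a : Fin p → B), Function.Injective a →
    ∑ σ ∈ univ.filter (fun σ : Fin n ≃ B =>
        ∀ i j : Fin p, i < j → σ.symm (a i) < σ.symm (a j)), plw n D σ
      = ∏ i : Fin p, D (a i) / ∑ j ∈ univ.filter (fun j => i ≤ j), D (a j) := by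
  intro n
  induction n with
  | zero =>
    intro B _ _ hc D hD p a ha
    match p with
    | p' + 1 => exact ((Fintype.card_eq_zero_iff.mp hc).elim (a 0))
    | 0 =>
      rw [Finset.filter_true_of_mem (fun σ _ => fun i j h => i.elim0)]
      have h1 : ∀ σ : Fin 0 ≃ B, plw 0 D σ = 1 := fun σ => by simp [plw]
      rw [Finset.sum_congr rfl (fun σ _ => h1 σ), Finset.sum_const, Finset.card_univ]
      have e : Fin 0 ≃ B := Fintype.equivOfCardEq (by simp [hc])
      rw [Fintype.card_equiv e]
      simp
  | succ n ih =>
    intro B _ _ hc D hD p a ha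
    have hSpos : (0:ℝ) < ∑ y, D y := by
      refine Finset.sum_pos (fun y _ => hD y) ?_
      rw [← Finset.card_pos, Finset.card_univ, hc]; omega
    match p with
    | 0 =>
      rw [decomp D _]
      have hinner : ∀ x : B,
          (∑ τ : Fin n ≃ {y : B // y ≠ x},
            if (∀ i j : Fin 0, i < j →
                (glue x τ).symm (a i) < (glue x τ).symm (a j))
              then plw n (fun y => D y.1) τ else 0) = 1 := by
        intro x
        rw [Finset.sum_congr rfl (fun τ _ => if_pos (fun i j h => i.elim0))]
        have := ih {y : B // y ≠ x} (card_sub hc x) (fun y => D y.1)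
          (fun y => hD y.1) 0 (fun i => i.elim0) (fun i => i.elim0)
        rw [Finset.filter_true_of_mem (fun τ _ => fun i j h => i.elim0)] at this
        rw [this]
        simp
      simp only [hinner, mul_one]
      rw [← Finset.sum_div, div_self (ne_of_gt hSpos)]
      simp
    | p' + 1 =>
      rw [decomp D _]
      -- abbreviations
      set S : ℝ := ∑ y, D y with hSdef
      set R' : ℝ := ∏ i : Fin p',
          D (a i.succ) / ∑ j ∈ univ.filter (fun j => i ≤ j), D (a j.succ) with hR'def
      set T0 : ℝ := ∑ j : Fin (p' + 1), D (a j) with hT0def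
      set F : B → ℝ := fun x => (D x / S) *
          ∑ τ : Fin n ≃ {y : B // y ≠ x},
            if (∀ i j : Fin (p' + 1), i < j →
                (glue x τ).symm (a i) < (glue x τ).symm (a j))
              then plw n (fun y => D y.1) τ else 0 with hF
      set R : ℝ := ∏ i : Fin (p' + 1),
          D (a i) / ∑ j ∈ univ.filter (fun j => i ≤ j), D (a j) with hRdef
      have hT0pos : (0:ℝ) < T0 := Finset.sum_pos (fun j _ => hD (a j)) univ_nonempty
      -- relation between R and R'
      have hR : R = D (a 0) / T0 * R' := by
        rw [hRdef, Fin.prod_univ_succ]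
        congr 1
        · rw [Finset.filter_true_of_mem (fun j _ => Fin.zero_le j)]
        · exact Finset.prod_congr rfl fun i _ => by rw [sum_filter_succ]
      -- value of F at a 0
      have hhead : F (a 0) = D (a 0) / S * R' := by
        rw [hF]
        simp only
        congr 1
        have hcong : ∀ τ : Fin n ≃ {y : B // y ≠ a 0},
            (if (∀ i j : Fin (p' + 1), i < j →
                (glue (a 0) τ).symm (a i) < (glue (a 0) τ).symm (a j))
              then plw n (fun y => D y.1) τ else 0)
            = (if (∀ i j : Fin p', i < j →
                τ.symm ⟨a i.succ, fun h => Fin.succ_ne_zero i (ha h)⟩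
                  < τ.symm ⟨a j.succ, fun h => Fin.succ_ne_zero j (ha h)⟩)
              then plw n (fun y => D y.1) τ else 0) :=
          fun τ => if_congr (cond_glue_head a ha τ) rfl rfl
        rw [Finset.sum_congr rfl (fun τ _ => hcong τ), ← Finset.sum_filter]
        have := ih {y : B // y ≠ a 0} (card_sub hc (a 0)) (fun y => D y.1)
          (fun y => hD y.1) p'
          (fun i => ⟨a i.succ, fun h => Fin.succ_ne_zero i (ha h)⟩)
          (fun i j h => Fin.succ_injective _ (ha (congrArg Subtype.val h)))
        rw [this, hR'def]
      -- value of F at a k.succ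
      have hmid : ∀ k : Fin p', F (a k.succ) = 0 := by
        intro k
        rw [hF]
        simp only
        rw [Finset.sum_eq_zero (fun τ _ => if_neg (cond_glue_mid a ha k τ)), mul_zero]
      -- value of F outside the range of a
      have hout : ∀ x ∈ (Finset.image a univ)ᶜ, F x = D x / S * R := by
        intro x hx
        have hxne : ∀ k, a k ≠ x := fun k h =>
          (Finset.mem_compl.mp hx) (Finset.mem_image.mpr ⟨k, Finset.mem_univ k, h⟩)
        rw [hF]
        simp only
        congr 1
        have hcong : ∀ τ : Fin n ≃ {y : B // y ≠ x},
            (if (∀ i j : Fin (p' + 1), i < j →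
                (glue x τ).symm (a i) < (glue x τ).symm (a j))
              then plw n (fun y => D y.1) τ else 0)
            = (if (∀ i j : Fin (p' + 1), i < j →
                τ.symm ⟨a i, hxne i⟩ < τ.symm ⟨a j, hxne j⟩)
              then plw n (fun y => D y.1) τ else 0) :=
          fun τ => if_congr (cond_glue_notmem x τ a hxne) rfl rfl
        rw [Finset.sum_congr rfl (fun τ _ => hcong τ), ← Finset.sum_filter]
        have := ih {y : B // y ≠ x} (card_sub hc x) (fun y => D y.1)
          (fun y => hD y.1) (p' + 1)
          (fun i => ⟨a i, hxne i⟩)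
          (fun i j h => ha (congrArg Subtype.val h))
        rw [this, hRdef]
      -- split the sum over first elements
      rw [← Finset.sum_add_sum_compl (Finset.image a univ) F]
      have himgD : ∑ x ∈ Finset.image a univ, D x = T0 :=
        Finset.sum_image (fun x _ y _ h => ha h)
      have hsumc : ∑ x ∈ (Finset.image a univ)ᶜ, D x = S - T0 := by
        have := Finset.sum_compl_add_sum (Finset.image a univ) D
        rw [himgD] at this
        rw [hSdef]
        linarith
      have himg : ∑ x ∈ Finset.image a univ, F x = D (a 0) / S * R' := by
        rw [Finset.sum_image (fun x _ y _ h => ha h), Fin.sum_univ_succ]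
        rw [Finset.sum_congr rfl (fun k _ => hmid k), Finset.sum_const, smul_zero,
          add_zero, hhead]
      have hcompl : ∑ x ∈ (Finset.image a univ)ᶜ, F x = (S - T0) / S * R := by
        rw [Finset.sum_congr rfl hout, ← Finset.sum_mul, ← Finset.sum_div, hsumc]
      rw [himg, hcompl, hR]
      field_simp
      ring

end PLAux

/-- Under the Plackett–Luce (popularity) random ranking model
with positive weights `D` on a finite set, the probability that a given tuple
`a 0, …, a (p-1)` of distinct elements appears in the relative order
`a 0 ≻ a 1 ≻ ⋯ ≻ a (p-1)` equals `∏ i, D (a i) / (∑_{j ≥ i} D (a j))`. -/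
theorem plackett_luce_relative_order {A : Type*} [Fintype A] [DecidableEq A]
    (D : A → ℝ) (hD : ∀ x, 0 < D x)
    {p : ℕ} (a : Fin p → A) (ha : Function.Injective a) :
    ∑ σ ∈ univ.filter (fun σ : Fin (Fintype.card A) ≃ A =>
        ∀ i j : Fin p, i < j → σ.symm (a i) < σ.symm (a j)), plProb D σ
      = ∏ i : Fin p, D (a i) / ∑ j ∈ univ.filter (fun j => i ≤ j), D (a j) := by
  have h := PLAux.key (Fintype.card A) A rfl D hD p a ha
  simpa [PLAux.plw, plProb] using h
end
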